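/- Assume M = U Λ U⁻¹ is diagonalizable with U ∈ ℝ^{n×n} invertible and Λ real diagonal, all eigenvalues of M lie in an interval [a, b] where a and b have the same sign and 0, 1 ∉ [a, b], and m < p − 1. Then the aNGMRES(m, p) iterates from any u₀ satisfy ‖r_{jp}‖ ≤ (ε(a, b, m+1) · ‖M‖^p · κ₂(U))^j · ‖r₀‖ for all j ≥ 1. -/

import Mathlib

open Matrix Polynomial Set

noncomputable section

/-- Matrix–vector product, landing in Euclidean space. -/
def mulVecE {n : ℕ} (M : Matrix (Fin n) (Fin n) ℝ) (v : EuclideanSpace ℝ (Fin n)) :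
    EuclideanSpace ℝ (Fin n) :=
  WithLp.toLp 2 (M.mulVec v)

/-- Residual `r(u) = A u - b`. -/
def res {n : ℕ} (A : Matrix (Fin n) (Fin n) ℝ) (b u : EuclideanSpace ℝ (Fin n)) :
    EuclideanSpace ℝ (Fin n) :=
  mulVecE A u - b

/-- Richardson fixed-point map `q(u) = (I - A) u + b = M u + b` with `M = I - A`. -/
def fp {n : ℕ} (A : Matrix (Fin n) (Fin n) ℝ) (b u : EuclideanSpace ℝ (Fin n)) :
    EuclideanSpace ℝ (Fin n) :=
  mulVecE (1 - A) u + b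

/-- The NGMRES(m) least-squares objective at step `k`:
`β ↦ ‖r(q(u_k)) + Σ_{i=0}^m β_i (r(q(u_k)) - r(u_{k-i}))‖`. -/
def ngObj {n : ℕ} (A : Matrix (Fin n) (Fin n) ℝ) (b : EuclideanSpace ℝ (Fin n))
    (m : ℕ) (prev : ℕ → EuclideanSpace ℝ (Fin n)) (k : ℕ) (β : Fin (m+1) → ℝ) : ℝ :=
  ‖res A b (fp A b (prev k)) +
    ∑ i : Fin (m+1), β i • (res A b (fp A b (prev k)) - res A b (prev (k - (i : ℕ))))‖

/-- `next` is produced from `prev (k-m), …, prev k` by a single NGMRES(m) step: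
`next = q(u_k) + Σ_{i=0}^m β_i (q(u_k) - u_{k-i})` where `β` minimizes the
least-squares objective `ngObj`. -/
def NGMRESStep {n : ℕ} (A : Matrix (Fin n) (Fin n) ℝ) (b : EuclideanSpace ℝ (Fin n))
    (m : ℕ) (prev : ℕ → EuclideanSpace ℝ (Fin n)) (k : ℕ)
    (next : EuclideanSpace ℝ (Fin n)) : Prop :=
  ∃ β : Fin (m+1) → ℝ,
    (∀ γ : Fin (m+1) → ℝ, ngObj A b m prev k β ≤ ngObj A b m prev k γ) ∧
    next = fp A b (prev k) +
      ∑ i : Fin (m+1), β i • (fp A b (prev k) - prev (k - (i : ℕ)))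

/-- The spectral (ℓ²-operator) norm of a matrix. -/
def opNorm {n : ℕ} (M : Matrix (Fin n) (Fin n) ℝ) : ℝ :=
  ‖(Matrix.toEuclideanCLM (𝕜 := ℝ) M : EuclideanSpace ℝ (Fin n) →L[ℝ] EuclideanSpace ℝ (Fin n))‖

/-- The 2-norm condition number `κ₂(U) = ‖U‖ ‖U⁻¹‖`. -/
def condNum {n : ℕ} (U : Matrix (Fin n) (Fin n) ℝ) : ℝ :=
  opNorm U * opNorm U⁻¹

/-- `ε(a,b,s)`: minimum over real polynomials `p` of degree at most `s` with `p(1) = 1`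
of `max_{t ∈ [1/b, 1/a]} |p(t)|`. -/
def eps (a b : ℝ) (s : ℕ) : ℝ :=
  sInf {t : ℝ | ∃ p : Polynomial ℝ, p.natDegree ≤ s ∧ p.eval 1 = 1 ∧
    t = sSup ((fun x => |p.eval x|) '' Set.Icc (1/b) (1/a))}

/-- `χ(s)`: minimum over real polynomials `p` of degree at most `s` with `p(1) = 1`
of `max_{λ ∈ Σ(M)} |p(λ)|`, where `Σ(M)` is the set of eigenvalues of `M`. -/
def chiSp {n : ℕ} (M : Matrix (Fin n) (Fin n) ℝ) (s : ℕ) : ℝ :=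
  sInf {t : ℝ | ∃ p : Polynomial ℝ, p.natDegree ≤ s ∧ p.eval 1 = 1 ∧
    t = sSup ((fun x => |p.eval x|) '' spectrum ℝ M)}

/-- The Krylov subspace `K_k(A, r) = span{r, Ar, …, A^{k-1} r}`. -/
def Krylov {n : ℕ} (A : Matrix (Fin n) (Fin n) ℝ) (r : EuclideanSpace ℝ (Fin n)) (k : ℕ) :
    Submodule ℝ (EuclideanSpace ℝ (Fin n)) :=
  Submodule.span ℝ (Set.range fun i : Fin k => mulVecE (A ^ (i : ℕ)) r)

/-- The matrix `S_k = [u_{k-m+1}-u_{k-m}, …, u_k-u_{k-1}, q(u_k)-u_k] ∈ ℝ^{n×(m+1)}`. -/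
def Smat {n : ℕ} (A : Matrix (Fin n) (Fin n) ℝ) (b : EuclideanSpace ℝ (Fin n))
    (prev : ℕ → EuclideanSpace ℝ (Fin n)) (k m : ℕ) :
    Matrix (Fin n) (Fin (m+1)) ℝ :=
  Matrix.of fun r c =>
    if (c : ℕ) < m then prev (k - m + c + 1) r - prev (k - m + c) r
    else fp A b (prev k) r - prev k r

/-- `u` is the sequence of aNGMRES(m, p) iterates (with `m = ⊤` giving aNGMRES(∞, p)):
if `p ∤ k` then `u_k = q(u_{k-1})`, and if `p ∣ k` then `u_k` is produced by one
NGMRES(min(m, k-1)) step from `u_{k-1-m_k}, …, u_{k-1}`. -/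
def aNGMRES {n : ℕ} (A : Matrix (Fin n) (Fin n) ℝ) (b : EuclideanSpace ℝ (Fin n))
    (m : ℕ∞) (p : ℕ) (u : ℕ → EuclideanSpace ℝ (Fin n)) : Prop :=
  ∀ k, 1 ≤ k →
    (¬ p ∣ k → u k = fp A b (u (k-1))) ∧
    (p ∣ k → NGMRESStep A b (min m ((k : ℕ∞) - 1)).toNat u (k-1) (u k))

/-! Between two NGMRES steps the method is Richardson iteration, so inside a cycle the residuals
are `Mᵗ r`, with `r` the residual at the start of the cycle; since `m < p - 1`, all iterates
entering the NGMRES step lie in this Richardson stretch. For a polynomial `q` of degree at most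
`m + 1` with `q(1) = 1`, the coefficients `βᵢ = -q_{i+1}` turn the NGMRES objective into
`‖∑ⱼ q_j M^{p-j} r‖ = ‖U diag(λᵢ^p q(1/λᵢ)) U⁻¹ r‖ ≤ κ₂(U) ‖M‖^p max_{[1/b, 1/a]} |q| ‖r‖`,
using `|λᵢ| ≤ ‖M‖`. Optimality of the NGMRES step and an infimum over `q` give the factor
`ε(a, b, m+1) ‖M‖^p κ₂(U)` per cycle. -/

-- With this instance, `‖M‖` is definitionally `opNorm M`.
open scoped Matrix.Norms.L2Operator

section EuclideanAction

variable {n : ℕ}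

lemma mulVecE_eq_toEuclideanCLM (M : Matrix (Fin n) (Fin n) ℝ) (x : EuclideanSpace ℝ (Fin n)) :
    mulVecE M x = Matrix.toEuclideanCLM (𝕜 := ℝ) M x := rfl

lemma mulVecE_mul (M N : Matrix (Fin n) (Fin n) ℝ) (x : EuclideanSpace ℝ (Fin n)) :
    mulVecE (M * N) x = mulVecE M (mulVecE N x) := by
  simp [mulVecE_eq_toEuclideanCLM]

lemma mulVecE_sum_smul {ι : Type*} (s : Finset ι) (c : ι → ℝ)
    (N : ι → Matrix (Fin n) (Fin n) ℝ) (x : EuclideanSpace ℝ (Fin n)) :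
    mulVecE (∑ i ∈ s, c i • N i) x = ∑ i ∈ s, c i • mulVecE (N i) x := by
  simp [mulVecE_eq_toEuclideanCLM]

lemma norm_mulVecE_le (M : Matrix (Fin n) (Fin n) ℝ) (x : EuclideanSpace ℝ (Fin n)) :
    ‖mulVecE M x‖ ≤ ‖M‖ * ‖x‖ :=
  (Matrix.toEuclideanCLM (𝕜 := ℝ) M).le_opNorm x

lemma abs_le_norm_of_eq_conj_diagonal {M U : Matrix (Fin n) (Fin n) ℝ} {d : Fin n → ℝ}
    (hU : IsUnit U) (hM : M = U * Matrix.diagonal d * U⁻¹) (i : Fin n) : |d i| ≤ ‖M‖ := by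
  have hspec : d i ∈ spectrum ℝ M := by
    rw [hM, ← hU.unit_spec, ← Matrix.coe_units_inv, spectrum.units_conjugate, spectrum_diagonal]
    exact ⟨i, rfl⟩
  have : Nonempty (Fin n) := ⟨i⟩
  exact spectrum.norm_le_norm_of_mem hspec

lemma conj_diagonal_sum_smul_pow {U : Matrix (Fin n) (Fin n) ℝ} (hU : IsUnit U) (d : Fin n → ℝ)
    {ι : Type*} (s : Finset ι) (c : ι → ℝ) (e : ι → ℕ) :
    ∑ j ∈ s, c j • (U * Matrix.diagonal d * U⁻¹) ^ e j =
      U * Matrix.diagonal (fun i => ∑ j ∈ s, c j * d i ^ e j) * U⁻¹ := by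
  have hdiag : ∑ j ∈ s, c j • Matrix.diagonal d ^ e j =
      Matrix.diagonal (fun i => ∑ j ∈ s, c j * d i ^ e j) := by
    have := map_sum (Matrix.diagonalAlgHom ℝ (n := Fin n) (α := ℝ)) (fun j => c j • d ^ e j) s
    simp only [map_smul, map_pow, Matrix.diagonalAlgHom_apply] at this
    rw [← this]
    congr 1
    ext i
    simp [Finset.sum_apply]
  rw [← hdiag, ← hU.unit_spec, ← Matrix.coe_units_inv, Finset.mul_sum, Finset.sum_mul]
  simp only [Units.conj_pow, Matrix.mul_smul, Matrix.smul_mul]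

end EuclideanAction

lemma add_sum_smul_sub_eq_sum_coeff_smul {R E : Type*} [CommRing R] [AddCommGroup E]
    [Module R E] (q : R[X]) {s : ℕ} (hq : q.natDegree ≤ s + 1) (hq1 : q.eval 1 = 1)
    (v : ℕ → E) :
    v 0 + ∑ i : Fin (s + 1), (-q.coeff (i + 1)) • (v 0 - v (i + 1)) =
      ∑ j ∈ Finset.range (s + 2), q.coeff j • v j := by
  have hsum : ∑ j ∈ Finset.range (s + 2), q.coeff j = 1 := by
    simpa [hq1] using (eval_eq_sum_range' (Nat.lt_succ_of_le hq) (1 : R)).symm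
  rw [Finset.sum_range_succ'] at hsum ⊢
  rw [Fin.sum_univ_eq_sum_range (fun i => (-q.coeff (i + 1)) • (v 0 - v (i + 1))) (s + 1),
    show q.coeff 0 = 1 - ∑ i ∈ Finset.range (s + 1), q.coeff (i + 1) by linear_combination hsum]
  simp only [neg_smul, smul_sub, Finset.sum_neg_distrib, Finset.sum_sub_distrib, sub_smul,
    Finset.sum_smul, one_smul]
  abel

lemma sum_coeff_mul_pow_sub_eq {K : Type*} [Field K] (q : K[X]) {s p : ℕ} (hq : q.natDegree ≤ s)
    (hsp : s ≤ p) {y : K} (hy : y ≠ 0) :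
    ∑ j ∈ Finset.range (s + 1), q.coeff j * y ^ (p - j) = y ^ p * q.eval y⁻¹ := by
  rw [eval_eq_sum_range' (Nat.lt_succ_of_le hq), Finset.mul_sum]
  refine Finset.sum_congr rfl fun j hj => ?_
  rw [pow_sub₀ y hy (by have := Finset.mem_range.1 hj; omega), inv_pow]
  ring

lemma sSup_image_abs_nonneg (f : ℝ → ℝ) (K : Set ℝ) : 0 ≤ sSup ((fun t => |f t|) '' K) :=
  Real.sSup_nonneg (by rintro _ ⟨t, -, rfl⟩; exact abs_nonneg _)

lemma norm_sum_coeff_smul_pow_sub_le {n : ℕ} {M U : Matrix (Fin n) (Fin n) ℝ} {d : Fin n → ℝ}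
    (hU : IsUnit U) (hM : M = U * Matrix.diagonal d * U⁻¹) {α β : ℝ} (hd0 : ∀ i, d i ≠ 0)
    (hdK : ∀ i, (d i)⁻¹ ∈ Icc α β) (q : ℝ[X]) {s p : ℕ} (hq : q.natDegree ≤ s) (hsp : s ≤ p) :
    ‖∑ j ∈ Finset.range (s + 1), q.coeff j • M ^ (p - j)‖ ≤
      ‖U‖ * (‖M‖ ^ p * sSup ((fun t => |q.eval t|) '' Icc α β)) * ‖U⁻¹‖ := by
  set S := sSup ((fun t => |q.eval t|) '' Icc α β)
  have hbdd : BddAbove ((fun t => |q.eval t|) '' Icc α β) :=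
    (isCompact_Icc.image (Polynomial.continuous q).abs).bddAbove
  have hB : 0 ≤ ‖M‖ ^ p * S := by
    have := sSup_image_abs_nonneg (fun t => q.eval t) (Icc α β)
    positivity
  have he : ∀ i, |∑ j ∈ Finset.range (s + 1), q.coeff j * d i ^ (p - j)| ≤ ‖M‖ ^ p * S := by
    intro i
    rw [sum_coeff_mul_pow_sub_eq q hq hsp (hd0 i), abs_mul, abs_pow]
    gcongr
    · exact abs_le_norm_of_eq_conj_diagonal hU hM i
    · exact le_csSup hbdd ⟨_, hdK i, rfl⟩
  conv_lhs => rw [hM, conj_diagonal_sum_smul_pow hU]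
  refine (norm_mul_le _ _).trans (mul_le_mul_of_nonneg_right ((norm_mul_le _ _).trans
    (mul_le_mul_of_nonneg_left ?_ (norm_nonneg _))) (norm_nonneg _))
  rw [Matrix.l2_opNorm_diagonal]
  exact (pi_norm_le_iff_of_nonneg hB).2 fun i => (Real.norm_eq_abs _).trans_le (he i)

lemma mul_pos_of_mem_Icc {a c y : ℝ} (hac : 0 < a * c) (hy : y ∈ Icc a c) :
    0 < a * y ∧ 0 < y * c := by
  rcases lt_or_gt_of_ne (show a ≠ 0 by rintro rfl; simp at hac) with ha | ha
  · have hc : c < 0 := by nlinarith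
    exact ⟨by nlinarith [hy.1, hy.2], by nlinarith [hy.2]⟩
  · have hc : 0 < c := by nlinarith
    exact ⟨by nlinarith [hy.1], by nlinarith [hy.1, hy.2]⟩

lemma inv_mem_Icc_of_mul_pos {a c y : ℝ} (hac : 0 < a * c) (hy : y ∈ Icc a c) :
    y⁻¹ ∈ Icc c⁻¹ a⁻¹ := by
  obtain ⟨hay, hyc⟩ := mul_pos_of_mem_Icc hac hy
  constructor
  · rw [← sub_nonneg, inv_sub_inv (left_ne_zero_of_mul hyc.ne') (right_ne_zero_of_mul hyc.ne')]
    exact div_nonneg (sub_nonneg.2 hy.2) hyc.le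
  · rw [← sub_nonneg, inv_sub_inv (left_ne_zero_of_mul hay.ne') (right_ne_zero_of_mul hay.ne')]
    exact div_nonneg (sub_nonneg.2 hy.1) hay.le

lemma eps_nonneg (a c : ℝ) (s : ℕ) : 0 ≤ eps a c s :=
  Real.sInf_nonneg (by rintro _ ⟨q, -, -, rfl⟩; exact sSup_image_abs_nonneg _ _)

lemma le_eps_mul {a c x K : ℝ} {s : ℕ} (hK : 0 ≤ K)
    (h : ∀ q : ℝ[X], q.natDegree ≤ s → q.eval 1 = 1 →
      x ≤ sSup ((fun t => |q.eval t|) '' Icc (1/c) (1/a)) * K) :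
    x ≤ eps a c s * K := by
  rcases hK.eq_or_lt with rfl | hK
  · simpa using h 1 (by simp) (by simp)
  rw [← div_le_iff₀ hK]
  refine le_csInf ⟨_, 1, by simp, by simp, rfl⟩ ?_
  rintro _ ⟨q, hq, hq1, rfl⟩
  rw [div_le_iff₀ hK]
  exact h q hq hq1

section Iteration

variable {n : ℕ} {A : Matrix (Fin n) (Fin n) ℝ} {b : EuclideanSpace ℝ (Fin n)}

lemma res_fp (u : EuclideanSpace ℝ (Fin n)) :
    res A b (fp A b u) = mulVecE (1 - A) (res A b u) := by
  simp only [res, fp, mulVecE_eq_toEuclideanCLM, map_sub, map_one, map_add, _root_.sub_apply,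
    one_apply_eq_self]
  abel

lemma res_add_sum_smul_sub (x : EuclideanSpace ℝ (Fin n)) {ι : Type*} (s : Finset ι)
    (β : ι → ℝ) (y : ι → EuclideanSpace ℝ (Fin n)) :
    res A b (x + ∑ i ∈ s, β i • (x - y i)) =
      res A b x + ∑ i ∈ s, β i • (res A b x - res A b (y i)) := by
  simp only [res, mulVecE_eq_toEuclideanCLM, map_add, map_sum, map_smul, map_sub,
    sub_sub_sub_cancel_right]
  abel

lemma NGMRESStep.norm_res_le {m k : ℕ} {prev : ℕ → EuclideanSpace ℝ (Fin n)}
    {next : EuclideanSpace ℝ (Fin n)} (h : NGMRESStep A b m prev k next)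
    (γ : Fin (m + 1) → ℝ) : ‖res A b next‖ ≤ ngObj A b m prev k γ := by
  obtain ⟨β, hβ, rfl⟩ := h
  rw [res_add_sum_smul_sub]
  exact hβ γ

variable {p : ℕ} {u : ℕ → EuclideanSpace ℝ (Fin n)}

lemma res_aNGMRES_mul_add {m : ℕ∞} (hu : aNGMRES A b m p u) (j : ℕ) {t : ℕ} (ht : t < p) :
    res A b (u (j * p + t)) = mulVecE ((1 - A) ^ t) (res A b (u (j * p))) := by
  induction t with
  | zero => simp [mulVecE_eq_toEuclideanCLM]
  | succ t ih =>
    have hnd : ¬ p ∣ j * p + (t + 1) := by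
      rw [Nat.dvd_add_right (dvd_mul_left p j)]
      exact Nat.not_dvd_of_pos_of_lt t.succ_pos ht
    rw [(hu _ (by omega)).1 hnd, Nat.add_succ_sub_one, res_fp, ih (by omega), pow_succ',
      mulVecE_mul]

lemma NGMRESStep_of_aNGMRES {m k : ℕ} (hu : aNGMRES A b m p u) (hmk : m < k) (hpk : p ∣ k) :
    NGMRESStep A b m u (k - 1) (u k) := by
  have hmin : (min (m : ℕ∞) ((k : ℕ∞) - 1)).toNat = m := by
    rw [← ENat.natCast_one, ← ENat.natCast_sub,
      min_eq_left (by exact_mod_cast (by omega : m ≤ k - 1)), ENat.toNat_natCast]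
  simpa only [hmin] using (hu k (by omega)).2 hpk

end Iteration

theorem norm_res_aNGMRES_cycle_le {n m p : ℕ} (hmp : m + 1 < p)
    {A U : Matrix (Fin n) (Fin n) ℝ} {d : Fin n → ℝ} (hU : IsUnit U)
    (hM : 1 - A = U * Matrix.diagonal d * U⁻¹) {a c : ℝ} (hsign : 0 < a * c)
    (hd : ∀ i, d i ∈ Icc a c) {b : EuclideanSpace ℝ (Fin n)} {u : ℕ → EuclideanSpace ℝ (Fin n)}
    (hu : aNGMRES A b m p u) (j : ℕ) :
    ‖res A b (u ((j + 1) * p))‖ ≤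
      eps a c (m + 1) * ‖1 - A‖ ^ p * (‖U‖ * ‖U⁻¹‖) * ‖res A b (u (j * p))‖ := by
  set r := res A b (u (j * p))
  have hstep := NGMRESStep_of_aNGMRES hu (by nlinarith) (dvd_mul_left p (j + 1))
  have hhist : ∀ i ≤ m,
      res A b (u ((j + 1) * p - 1 - i)) = mulVecE ((1 - A) ^ (p - (i + 1))) r := by
    intro i hi
    rw [show (j + 1) * p - 1 - i = j * p + (p - (i + 1)) by rw [Nat.succ_mul]; omega]
    exact res_aNGMRES_mul_add hu j (by omega)
  have hlast : res A b (fp A b (u ((j + 1) * p - 1))) = mulVecE ((1 - A) ^ (p - 0)) r := by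
    rw [res_fp, ← Nat.sub_zero ((j + 1) * p - 1), hhist 0 (Nat.zero_le _), ← mulVecE_mul,
      ← pow_succ']
    congr 2
    omega
  have hd0 : ∀ i, d i ≠ 0 := fun i =>
    right_ne_zero_of_mul (mul_pos_of_mem_Icc hsign (hd i)).1.ne'
  have hdK : ∀ i, (d i)⁻¹ ∈ Icc (1 / c) (1 / a) := by
    simpa only [one_div] using fun i => inv_mem_Icc_of_mul_pos hsign (hd i)
  rw [mul_assoc _ (‖U‖ * _), mul_assoc]
  refine le_eps_mul (by positivity) fun q hq hq1 => ?_
  calc ‖res A b (u ((j + 1) * p))‖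
      ≤ ngObj A b m u ((j + 1) * p - 1) (fun i => -q.coeff (i + 1)) := hstep.norm_res_le _
    _ = ‖mulVecE (∑ j ∈ Finset.range (m + 2), q.coeff j • (1 - A) ^ (p - j)) r‖ := by
      rw [mulVecE_sum_smul, ← add_sum_smul_sub_eq_sum_coeff_smul q hq hq1
        (fun j => mulVecE ((1 - A) ^ (p - j)) r)]
      simp only [ngObj, hlast, hhist _ (Fin.is_le _)]
    _ ≤ ‖∑ j ∈ Finset.range (m + 2), q.coeff j • (1 - A) ^ (p - j)‖ * ‖r‖ :=
      norm_mulVecE_le _ _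
    _ ≤ ‖U‖ * (‖1 - A‖ ^ p * sSup ((fun t => |q.eval t|) '' Icc (1 / c) (1 / a))) * ‖U⁻¹‖ *
          ‖r‖ := by
      gcongr
      exact norm_sum_coeff_smul_pow_sub_le hU hM hd0 hdK q hq (by omega)
    _ = _ := by ring

theorem stmt_14_general {n m p : ℕ} (hmp : m < p - 1) (A U : Matrix (Fin n) (Fin n) ℝ)
    (d : Fin n → ℝ) (hU : IsUnit U)
    (hM : (1 : Matrix (Fin n) (Fin n) ℝ) - A = U * Matrix.diagonal d * U⁻¹)
    (a c : ℝ) (hsign : 0 < a * c)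
    (hd : ∀ i, d i ∈ Set.Icc a c)
    (b : EuclideanSpace ℝ (Fin n)) (u : ℕ → EuclideanSpace ℝ (Fin n))
    (hu : aNGMRES A b (m : ℕ∞) p u) :
    ∀ j : ℕ, 1 ≤ j →
      ‖res A b (u (j * p))‖ ≤
        (eps a c (m+1) * opNorm ((1 : Matrix (Fin n) (Fin n) ℝ) - A) ^ p * condNum U) ^ j *
          ‖res A b (u 0)‖ := by
  intro j _
  have hC : 0 ≤ eps a c (m + 1) * opNorm (1 - A) ^ p * condNum U :=
    mul_nonneg (mul_nonneg (eps_nonneg a c (m + 1)) (pow_nonneg (norm_nonneg _) p))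
      (mul_nonneg (norm_nonneg _) (norm_nonneg _))
  simpa only [zero_mul] using le_geom (u := fun j => ‖res A b (u (j * p))‖) hC j fun k _ =>
    norm_res_aNGMRES_cycle_le (by omega) hU hM hsign hd hu k

/-- aNGMRES(m, p), m < p-1, diagonalizable case:
`‖r_{jp}‖ ≤ (ε(a, b, m+1) ‖M‖^p κ₂(U))^j ‖r₀‖`. -/
theorem stmt_14 {n m p : ℕ} (hmp : m < p - 1) (A U : Matrix (Fin n) (Fin n) ℝ)
    (d : Fin n → ℝ) (hA : IsUnit A) (hU : IsUnit U)
    (hM : (1 : Matrix (Fin n) (Fin n) ℝ) - A = U * Matrix.diagonal d * U⁻¹)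
    (a c : ℝ) (hac : a < c) (hsign : 0 < a * c)
    (h0 : (0 : ℝ) ∉ Set.Icc a c) (h1 : (1 : ℝ) ∉ Set.Icc a c)
    (hd : ∀ i, d i ∈ Set.Icc a c)
    (b : EuclideanSpace ℝ (Fin n)) (u : ℕ → EuclideanSpace ℝ (Fin n))
    (hu : aNGMRES A b (m : ℕ∞) p u) :
    ∀ j : ℕ, 1 ≤ j →
      ‖res A b (u (j * p))‖ ≤
        (eps a c (m+1) * opNorm ((1 : Matrix (Fin n) (Fin n) ℝ) - A) ^ p * condNum U) ^ j *
          ‖res A b (u 0)‖ :=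
  stmt_14_general hmp A U d hU hM a c hsign hd b u hu

end
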